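/- Suppose M contains an element with zero annihilator and N is a proper submodule of M containing every torsion element of M (i.e., every m ∈ M with Ann_R(m) ≠ 0 lies in N). Then N is a weakly classical 1-absorbing prime submodule of M if and only if (N :_R m) is a weakly 1-absorbing prime ideal of R for every m ∈ M \ N. -/

import Mathlib

/-- A proper submodule `N` of `M` is weakly classical 1-absorbing prime if whenever
`abcm ∈ N` and `abcm ≠ 0` for nonunits `a, b, c ∈ R` and `m ∈ M`, then `abm ∈ N` or `cm ∈ N`. -/
def IsWeaklyClassical1AbsorbingPrime {R : Type*} [CommRing R] {M : Type*} [AddCommGroup M]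
    [Module R M] (N : Submodule R M) : Prop :=
  N ≠ ⊤ ∧ ∀ a b c : R, ∀ m : M, ¬ IsUnit a → ¬ IsUnit b → ¬ IsUnit c →
    (a * b * c) • m ∈ N → (a * b * c) • m ≠ 0 → ((a * b) • m ∈ N ∨ c • m ∈ N)

/-- A proper ideal `I` of `R` is weakly 1-absorbing prime if whenever `abc ∈ I` and
`abc ≠ 0` for nonunits `a, b, c ∈ R`, then `ab ∈ I` or `c ∈ I`. -/
def IsWeakly1AbsorbingPrimeIdeal {R : Type*} [CommRing R] (I : Ideal R) : Prop :=
  I ≠ ⊤ ∧ ∀ a b c : R, ¬ IsUnit a → ¬ IsUnit b → ¬ IsUnit c →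
    a * b * c ∈ I → a * b * c ≠ 0 → (a * b ∈ I ∨ c ∈ I)

section

variable {R : Type*} [CommRing R] {M : Type*} [AddCommGroup M] [Module R M]
  {N : Submodule R M} {m : M}

theorem Submodule.mem_comap_toSpanSingleton {r : R} :
    r ∈ N.comap (LinearMap.toSpanSingleton R M m) ↔ r • m ∈ N := by
  rw [Submodule.mem_comap, LinearMap.toSpanSingleton_apply]

theorem Submodule.comap_toSpanSingleton_ne_top (hm : m ∉ N) :
    N.comap (LinearMap.toSpanSingleton R M m) ≠ ⊤ := fun h =>
  hm (one_smul R m ▸ Submodule.mem_comap_toSpanSingleton.mp (h ▸ Submodule.mem_top))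

theorem IsWeaklyClassical1AbsorbingPrime.isWeakly1AbsorbingPrimeIdeal_comap_toSpanSingleton
    (hN : IsWeaklyClassical1AbsorbingPrime N) (hm : m ∉ N)
    (hann : ∀ x : R, x • m = 0 → x = 0) :
    IsWeakly1AbsorbingPrimeIdeal (N.comap (LinearMap.toSpanSingleton R M m)) := by
  refine ⟨Submodule.comap_toSpanSingleton_ne_top hm, fun a b c ha hb hc habc hne => ?_⟩
  simp only [Submodule.mem_comap_toSpanSingleton] at habc ⊢
  exact hN.2 a b c m ha hb hc habc (mt (hann _) hne)

theorem IsWeaklyClassical1AbsorbingPrime.of_comap_toSpanSingleton (hN : N ≠ ⊤)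
    (h : ∀ m : M, m ∉ N →
      IsWeakly1AbsorbingPrimeIdeal (N.comap (LinearMap.toSpanSingleton R M m))) :
    IsWeaklyClassical1AbsorbingPrime N := by
  refine ⟨hN, fun a b c m ha hb hc habc hne => ?_⟩
  by_cases hm : m ∈ N
  · exact Or.inl (N.smul_mem _ hm)
  · have hne' : a * b * c ≠ 0 := fun h0 => hne (by rw [h0, zero_smul])
    simpa only [Submodule.mem_comap_toSpanSingleton] using
      (h m hm).2 a b c ha hb hc (Submodule.mem_comap_toSpanSingleton.mpr habc) hne'

end

theorem stmt_1_general {R : Type*} [CommRing R] {M : Type*} [AddCommGroup M]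
    [Module R M] (N : Submodule R M) (hN : N ≠ ⊤)
    (htor : ∀ m : M, (∃ x : R, x ≠ 0 ∧ x • m = 0) → m ∈ N) :
    IsWeaklyClassical1AbsorbingPrime N ↔
      ∀ m : M, m ∉ N →
        IsWeakly1AbsorbingPrimeIdeal (Submodule.comap (LinearMap.toSpanSingleton R M m) N) := by
  refine ⟨fun h m hm => ?_, IsWeaklyClassical1AbsorbingPrime.of_comap_toSpanSingleton hN⟩
  have hann : ∀ x : R, x • m = 0 → x = 0 := fun x hx =>
    by_contra fun hx0 => hm (htor m ⟨x, hx0, hx⟩)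
  exact h.isWeakly1AbsorbingPrimeIdeal_comap_toSpanSingleton hm hann

/-- If `M` has an element with zero annihilator and every torsion element of
`M` lies in the proper submodule `N`, then `N` is weakly classical 1-absorbing prime iff
`(N :_R m)` is a weakly 1-absorbing prime ideal for every `m ∈ M \ N`. -/
theorem stmt_1 {R : Type*} [CommRing R] [Nontrivial R] {M : Type*} [AddCommGroup M]
    [Module R M] [Nontrivial M] (N : Submodule R M) (hN : N ≠ ⊤)
    (hnt : ∃ m : M, ∀ x : R, x • m = 0 → x = 0)
    (htor : ∀ m : M, (∃ x : R, x ≠ 0 ∧ x • m = 0) → m ∈ N) :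
    IsWeaklyClassical1AbsorbingPrime N ↔
      ∀ m : M, m ∉ N →
        IsWeakly1AbsorbingPrimeIdeal (Submodule.comap (LinearMap.toSpanSingleton R M m) N) :=
  stmt_1_general N hN htor
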